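/- If a signed graph (G,σ) is switching-equivalent to (G,−) (the all-negative signature), then the underlying graph of EDC(G,σ) is bipartite and the negative girth of EDC(G,σ) equals g_−(G,σ) + 1. Conversely, if the underlying graph G is bipartite, then EDC(G,σ) admits a switching after which all its edges are negative, and the negative girth of EDC(G,σ), which equals the odd girth of its underlying graph, is g_−(G,σ) + 1. -/

import Mathlib

universe u v

/-- A signed graph on vertex set `V`: two symmetric relations giving the positive and the
negative adjacencies (a pair joined by both a positive and a negative edge is a digon). -/
structure SignedGraph (V : Type u) where
  pos : V → V → Prop
  neg : V → V → Prop
  pos_symm : ∀ ⦃x y : V⦄, pos x y → pos y x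
  neg_symm : ∀ ⦃x y : V⦄, neg x y → neg y x

namespace SignedGraph

variable {V : Type u} {W : Type v}

/-- Walks in a signed graph, recording the sign of every step. -/
inductive Walk (G : SignedGraph V) : V → V → Type u
  | nil (v : V) : Walk G v v
  | consPos {u v w : V} (h : G.pos u v) (p : Walk G v w) : Walk G u w
  | consNeg {u v w : V} (h : G.neg u v) (p : Walk G v w) : Walk G u w

namespace Walk

variable {G : SignedGraph V}

/-- The length of a walk. -/
def length : ∀ {u v : V}, G.Walk u v → ℕ
  | _, _, .nil _ => 0
  | _, _, .consPos _ p => p.length + 1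
  | _, _, .consNeg _ p => p.length + 1

/-- The number of negative edges of a walk (counted with multiplicity). -/
def negCount : ∀ {u v : V}, G.Walk u v → ℕ
  | _, _, .nil _ => 0
  | _, _, .consPos _ p => p.negCount
  | _, _, .consNeg _ p => p.negCount + 1

/-- Concatenation of walks. -/
def append : ∀ {u v w : V}, G.Walk u v → G.Walk v w → G.Walk u w
  | _, _, _, .nil _, q => q
  | _, _, _, .consPos h p, q => .consPos h (p.append q)
  | _, _, _, .consNeg h p, q => .consNeg h (p.append q)

/-- Reversal of a walk. -/
def reverse : ∀ {u v : V}, G.Walk u v → G.Walk v u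
  | _, _, .nil v => .nil v
  | _, _, .consPos h p => p.reverse.append (.consPos (G.pos_symm h) (.nil _))
  | _, _, .consNeg h p => p.reverse.append (.consNeg (G.neg_symm h) (.nil _))

end Walk

/-- `g_{ij}(G,σ)`: the length of a shortest (nontrivial) closed walk in which the number of
negative edges has parity `i` and the length has parity `j`; `⊤ = ∞` if no such walk exists. -/
noncomputable def gir (G : SignedGraph V) (i j : ZMod 2) : ℕ∞ :=
  sInf {n : ℕ∞ | ∃ (v : V) (p : G.Walk v v),
    0 < p.length ∧ (p.negCount : ZMod 2) = i ∧ (p.length : ZMod 2) = j ∧ (p.length : ℕ∞) = n}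

/-- The negative (unbalanced) girth: the length of a shortest negative closed walk, which is
the same as the length of a shortest negative cycle (`⊤ = ∞` if there is none). -/
noncomputable def negGirth (G : SignedGraph V) : ℕ∞ :=
  sInf {n : ℕ∞ | ∃ (v : V) (p : G.Walk v v), Odd p.negCount ∧ (p.length : ℕ∞) = n}

/-- The odd girth of the underlying graph: the length of a shortest closed walk of odd length,
which is the same as the length of a shortest odd cycle (`⊤ = ∞` if there is none). -/
noncomputable def oddGirth (G : SignedGraph V) : ℕ∞ :=
  sInf {n : ℕ∞ | ∃ (v : V) (p : G.Walk v v), Odd p.length ∧ (p.length : ℕ∞) = n}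

/-- Switching a signed graph at a set `X` of vertices: the sign of every edge with exactly one
endpoint in `X` is negated. -/
def switch (G : SignedGraph V) (X : Set V) : SignedGraph V where
  pos x y := (G.pos x y ∧ ((x ∈ X) ↔ (y ∈ X))) ∨ (G.neg x y ∧ ¬((x ∈ X) ↔ (y ∈ X)))
  neg x y := (G.neg x y ∧ ((x ∈ X) ↔ (y ∈ X))) ∨ (G.pos x y ∧ ¬((x ∈ X) ↔ (y ∈ X)))
  pos_symm := by
    rintro x y (⟨h, hxy⟩ | ⟨h, hxy⟩)
    · exact Or.inl ⟨G.pos_symm h, hxy.symm⟩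
    · exact Or.inr ⟨G.neg_symm h, fun h' => hxy h'.symm⟩
  neg_symm := by
    rintro x y (⟨h, hxy⟩ | ⟨h, hxy⟩)
    · exact Or.inl ⟨G.neg_symm h, hxy.symm⟩
    · exact Or.inr ⟨G.pos_symm h, fun h' => hxy h'.symm⟩

/-- A homomorphism of signed graphs: a vertex map which, after replacing the signature of the
source by a switching-equivalent one, preserves edges together with their signs. -/
def Hom (G : SignedGraph V) (H : SignedGraph W) : Prop :=
  ∃ (X : Set V) (f : V → W),
    (∀ ⦃x y : V⦄, (G.switch X).pos x y → H.pos (f x) (f y)) ∧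
    (∀ ⦃x y : V⦄, (G.switch X).neg x y → H.neg (f x) (f y))

/-- Isomorphism of signed graphs: a bijection carrying positive edges to positive edges and
negative edges to negative edges. -/
def Iso (G : SignedGraph V) (H : SignedGraph W) : Prop :=
  ∃ f : V ≃ W, (∀ x y, G.pos x y ↔ H.pos (f x) (f y)) ∧ (∀ x y, G.neg x y ↔ H.neg (f x) (f y))

/-- Two signed graphs are switching-isomorphic if one is isomorphic to a switching of the
other. -/
def SwitchIso (G : SignedGraph V) (H : SignedGraph W) : Prop :=
  ∃ X : Set W, Iso G (H.switch X)

/-- The induced signed subgraph on a set of vertices. -/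
def induce (G : SignedGraph V) (X : Set V) : SignedGraph X where
  pos a b := G.pos a b
  neg a b := G.neg a b
  pos_symm := fun _ _ h => G.pos_symm h
  neg_symm := fun _ _ h => G.neg_symm h

/-- The "same connected component" equivalence relation. -/
def reachSetoid (G : SignedGraph V) : Setoid V :=
  ⟨fun u v => Nonempty (G.Walk u v),
   ⟨fun v => ⟨Walk.nil v⟩,
    fun h => h.elim fun p => ⟨p.reverse⟩,
    fun h h' => h.elim fun p => h'.elim fun q => ⟨p.append q⟩⟩⟩

/-- The underlying graph is bipartite. -/
def Bipartite (G : SignedGraph V) : Prop :=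
  ∃ c : V → Bool, ∀ x y, (G.pos x y ∨ G.neg x y) → c x ≠ c y

/-- The extended double cover of a signed graph: vertices `x₀, x₁` for every vertex `x`,
a negative edge `x₀x₁` for every vertex `x`, positive edges `x₀y₀, x₁y₁` for every positive
edge `xy` and positive edges `x₀y₁, x₁y₀` for every negative edge `xy`. -/
def EDC (G : SignedGraph V) : SignedGraph (V × ZMod 2) where
  pos p q := (G.pos p.1 q.1 ∧ p.2 = q.2) ∨ (G.neg p.1 q.1 ∧ p.2 ≠ q.2)
  neg p q := p.1 = q.1 ∧ p.2 ≠ q.2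
  pos_symm := by
    rintro p q (⟨h, e⟩ | ⟨h, e⟩)
    · exact Or.inl ⟨G.pos_symm h, e.symm⟩
    · exact Or.inr ⟨G.neg_symm h, fun h' => e h'.symm⟩
  neg_symm := by
    rintro p q ⟨h, e⟩
    exact ⟨h.symm, fun h' => e h'.symm⟩

/-- The common product of two signed graphs: the positive edges form the Cartesian product of
the positive subgraphs, the negative edges form the categorical product of the negative
subgraphs. -/
def cprod (G : SignedGraph V) (H : SignedGraph W) : SignedGraph (V × W) where
  pos p q := (G.pos p.1 q.1 ∧ p.2 = q.2) ∨ (p.1 = q.1 ∧ H.pos p.2 q.2)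
  neg p q := G.neg p.1 q.1 ∧ H.neg p.2 q.2
  pos_symm := by
    rintro p q (⟨h, e⟩ | ⟨e, h⟩)
    · exact Or.inl ⟨G.pos_symm h, e.symm⟩
    · exact Or.inr ⟨e.symm, H.pos_symm h⟩
  neg_symm := fun _ _ h => ⟨G.neg_symm h.1, H.neg_symm h.2⟩

end SignedGraph

section Cayley

lemma sub_comm_of_two_torsion {Γ : Type u} [AddCommGroup Γ] (h2 : ∀ x : Γ, x + x = 0)
    (x y : Γ) : y - x = x - y := by
  rw [← neg_sub x y]
  exact neg_eq_of_add_eq_zero_left (h2 (x - y))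

/-- The signed Cayley graph `(Γ, S⁺, S⁻)` on an elementary abelian `2`-group `Γ`:
`x` and `y` are joined by a positive edge when `x - y ∈ S⁺` and by a negative
edge when `x - y ∈ S⁻`. -/
def SCayley2 (Γ : Type u) [AddCommGroup Γ] (h2 : ∀ x : Γ, x + x = 0)
    (Sp Sn : Set Γ) : SignedGraph Γ where
  pos x y := x - y ∈ Sp
  neg x y := x - y ∈ Sn
  pos_symm := fun x y h => by
    show y - x ∈ Sp
    rw [sub_comm_of_two_torsion h2 x y]
    exact h
  neg_symm := fun x y h => by
    show y - x ∈ Sn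
    rw [sub_comm_of_two_torsion h2 x y]
    exact h

lemma pi2 (n : ℕ) : ∀ x : Fin n → ZMod 2, x + x = 0 := by
  intro x
  funext i
  have h : ∀ a : ZMod 2, a + a = 0 := by decide
  exact h (x i)

/-- The signed projective cube `SPC(k)`: the signed Cayley graph on `ℤ₂ᵏ` whose positive
difference set is the standard basis `{e₁, …, e_k}` and whose negative difference set is `{J}`,
`J` being the all-ones vector. -/
def SPC (k : ℕ) : SignedGraph (Fin k → ZMod 2) :=
  SCayley2 _ (pi2 k) {z | ∃ i : Fin k, z = Pi.single i 1} {fun _ => 1}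

/-- `SPC°(k)`: the signed projective cube together with a positive loop at every vertex, i.e.
the signed Cayley graph `(ℤ₂ᵏ, {0, e₁, …, e_k}, {J})`. -/
def SPCo (k : ℕ) : SignedGraph (Fin k → ZMod 2) :=
  SCayley2 _ (pi2 k) ({z | z = 0} ∪ {z | ∃ i : Fin k, z = Pi.single i 1}) {fun _ => 1}

/-- The Hamming weight of a vector in `ℤ₂ⁿ`. -/
def wt {n : ℕ} (x : Fin n → ZMod 2) : ℕ := (Finset.univ.filter fun i => x i ≠ 0).card

end Cayley


section Aux

open SignedGraph

variable {V : Type u} {G : SignedGraph V}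

namespace SignedGraph.Walk

lemma length_append : ∀ {u v w : V} (p : G.Walk u v) (q : G.Walk v w),
    (p.append q).length = p.length + q.length
  | _, _, _, .nil _, q => by simp [append, length]
  | _, _, _, .consPos h p, q => by
      simp [append, length, length_append p q]; omega
  | _, _, _, .consNeg h p, q => by
      simp [append, length, length_append p q]; omega

lemma negCount_append : ∀ {u v w : V} (p : G.Walk u v) (q : G.Walk v w),
    (p.append q).negCount = p.negCount + q.negCount
  | _, _, _, .nil _, q => by simp [append, negCount]
  | _, _, _, .consPos h p, q => by
      simp [append, negCount, negCount_append p q]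
  | _, _, _, .consNeg h p, q => by
      simp [append, negCount, negCount_append p q]; omega


def copy {x y z : V} (e : x = y) (p : G.Walk y z) : G.Walk x z := e ▸ p

lemma length_copy {x y z : V} (e : x = y) (p : G.Walk y z) :
    (copy e p).length = p.length := by subst e; rfl

lemma negCount_copy {x y z : V} (e : x = y) (p : G.Walk y z) :
    (copy e p).negCount = p.negCount := by subst e; rfl

end SignedGraph.Walk

lemma odd_iff_zmod (n : ℕ) : Odd n ↔ (n : ZMod 2) = 1 := by
  rw [Nat.odd_iff, ← ZMod.natCast_mod]
  rcases Nat.mod_two_eq_zero_or_one n with h | h <;> rw [h] <;> simp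

lemma zmod2_ne {i j : ZMod 2} (h : i ≠ j) : j = i + 1 := by revert h; revert i j; decide

/-- Lifting a walk of `G` to a walk of `EDC G` consisting of positive edges only. -/
lemma edc_lift {u v : V} (p : G.Walk u v) : ∀ i j : ZMod 2,
    j = i + (p.negCount : ZMod 2) →
    ∃ q : (EDC G).Walk (u, i) (v, j), q.length = p.length ∧ q.negCount = 0 := by
  induction p with
  | nil v =>
    intro i j hj
    have hji : j = i := by simpa [Walk.negCount] using hj
    subst hji
    exact ⟨.nil _, rfl, rfl⟩
  | @consPos u m v h p ih =>
    intro i j hj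
    obtain ⟨q, hl, hn⟩ := ih i j (by simpa [Walk.negCount] using hj)
    refine ⟨.consPos (show (EDC G).pos (u, i) (m, i) from Or.inl ⟨h, rfl⟩) q,
      by simp [Walk.length, hl], by simpa [Walk.negCount] using hn⟩
  | @consNeg u m v h p ih =>
    intro i j hj
    obtain ⟨q, hl, hn⟩ := ih (i + 1) j (by
      push_cast [Walk.negCount] at hj ⊢
      rw [hj]; ring)
    have hne : ∀ k : ZMod 2, k ≠ k + 1 := by decide
    refine ⟨.consPos (show (EDC G).pos (u, i) (m, i + 1) from Or.inr ⟨h, hne i⟩) q,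
      by simp [Walk.length, hl], by simpa [Walk.negCount] using hn⟩

/-- Projecting a walk of `EDC G` to a walk of `G`. -/
lemma edc_proj {a b : V × ZMod 2} (q : (EDC G).Walk a b) :
    ∃ p : G.Walk a.1 b.1, p.length + q.negCount = q.length ∧
      b.2 = a.2 + ((p.negCount + q.negCount : ℕ) : ZMod 2) := by
  induction q with
  | nil v => exact ⟨.nil _, by simp [Walk.negCount, Walk.length], by simp [Walk.negCount]⟩
  | @consPos a m b h q ih =>
    obtain ⟨p, hl, hc⟩ := ih
    rcases h with ⟨h, e⟩ | ⟨h, e⟩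
    · refine ⟨.consPos h p, ?_, ?_⟩
      · simp only [Walk.length, Walk.negCount]; omega
      · simp only [Walk.negCount]
        push_cast at hc ⊢
        linear_combination hc - e
    · have e2 : m.2 = a.2 + 1 := zmod2_ne e
      refine ⟨.consNeg h p, ?_, ?_⟩
      · simp only [Walk.length, Walk.negCount]; omega
      · simp only [Walk.negCount]
        push_cast at hc ⊢
        linear_combination hc + e2
  | @consNeg a m b h q ih =>
    obtain ⟨p, hl, hc⟩ := ih
    have e2 : m.2 = a.2 + 1 := zmod2_ne h.2
    refine ⟨Walk.copy h.1 p, ?_, ?_⟩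
    · simp only [Walk.length, Walk.negCount, Walk.length_copy]; omega
    · simp only [Walk.negCount, Walk.negCount_copy]
      push_cast at hc ⊢
      linear_combination hc + e2

/-- Parity invariant in `EDC G` when `G` is bipartite. -/
lemma edc_parity {c : V → Bool} (hc : ∀ x y, (G.pos x y ∨ G.neg x y) → c x ≠ c y)
    {a b : V × ZMod 2} (q : (EDC G).Walk a b) :
    ((q.length + q.negCount : ℕ) : ZMod 2) = if c a.1 = c b.1 then 0 else 1 := by
  induction q with
  | nil v => simp [Walk.length, Walk.negCount]
  | @consPos a m b h q ih =>
    have hne : c a.1 ≠ c m.1 := by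
      rcases h with ⟨h, _⟩ | ⟨h, _⟩
      · exact hc _ _ (Or.inl h)
      · exact hc _ _ (Or.inr h)
    have aux : ∀ x y z : Bool, x ≠ y →
        (if y = z then (0 : ZMod 2) else 1) + 1 = if x = z then 0 else 1 := by decide
    simp only [Walk.length, Walk.negCount]
    push_cast at ih ⊢
    linear_combination ih + aux _ _ _ hne
  | @consNeg a m b h q ih =>
    have e : c a.1 = c m.1 := by rw [h.1]
    rw [e]
    simp only [Walk.length, Walk.negCount]
    have h2 : (2 : ZMod 2) = 0 := rfl
    push_cast at ih ⊢
    linear_combination ih + h2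

end Aux

lemma zmod2_one_iff {i j : ZMod 2} (h : i ≠ j) : (i = 1) ↔ ¬ (j = 1) := by
  revert h; revert i j; decide

/-- if `(G,σ)` is switching-equivalent to `(G,-)` then `EDC(G,σ)` is a signed
bipartite graph of negative girth `g₋(G,σ)+1`; conversely if `G` is bipartite then `EDC(G,σ)`
can be switched to be all-negative and its negative girth, which equals the odd girth of its
underlying graph, is `g₋(G,σ)+1`. -/
theorem edc_bipartite_antibalanced {V : Type u} (G : SignedGraph V) :
    ((∃ X : Set V, ∀ x y, ¬ (G.switch X).pos x y) →
      SignedGraph.Bipartite (SignedGraph.EDC G) ∧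
      SignedGraph.negGirth (SignedGraph.EDC G) = SignedGraph.negGirth G + 1) ∧
    (SignedGraph.Bipartite G →
      (∃ X : Set (V × ZMod 2), ∀ p q, ¬ ((SignedGraph.EDC G).switch X).pos p q) ∧
      SignedGraph.negGirth (SignedGraph.EDC G) = SignedGraph.oddGirth (SignedGraph.EDC G) ∧
      SignedGraph.negGirth (SignedGraph.EDC G) = SignedGraph.negGirth G + 1) := by
  classical
  have h2 : (2 : ZMod 2) = 0 := rfl
  have key : SignedGraph.negGirth (SignedGraph.EDC G) = SignedGraph.negGirth G + 1 := by
    apply le_antisymm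
    · by_cases htop : SignedGraph.negGirth G = ⊤
      · rw [htop]
        simp
      · have hne : {n : ℕ∞ | ∃ (v : V) (p : G.Walk v v),
            Odd p.negCount ∧ (p.length : ℕ∞) = n}.Nonempty := by
          by_contra hemp
          rw [Set.not_nonempty_iff_eq_empty] at hemp
          exact htop (by rw [SignedGraph.negGirth, hemp, sInf_empty])
        have hmem : SignedGraph.negGirth G ∈ {n : ℕ∞ | ∃ (v : V) (p : G.Walk v v),
            Odd p.negCount ∧ (p.length : ℕ∞) = n} := csInf_mem hne
        obtain ⟨v, p, hodd, hlen⟩ := hmem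
        have h1 : (1 : ZMod 2) = 0 + (p.negCount : ZMod 2) := by
          rw [(odd_iff_zmod _).mp hodd]; ring
        obtain ⟨q, hql, hqn⟩ := edc_lift p 0 1 h1
        set r := q.append (.consNeg
          (show (SignedGraph.EDC G).neg (v, 1) (v, 0) from ⟨rfl, (by decide : (1 : ZMod 2) ≠ 0)⟩)
          (.nil (v, 0))) with hr
        have hrl : r.length = p.length + 1 := by
          rw [hr, SignedGraph.Walk.length_append, hql]
          simp [SignedGraph.Walk.length]
        have hrn : r.negCount = 1 := by
          rw [hr, SignedGraph.Walk.negCount_append, hqn]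
          simp [SignedGraph.Walk.negCount]
        have hmem2 : ((p.length + 1 : ℕ) : ℕ∞) ∈ {n : ℕ∞ |
            ∃ (w : V × ZMod 2) (r : (SignedGraph.EDC G).Walk w w),
              Odd r.negCount ∧ (r.length : ℕ∞) = n} :=
          ⟨(v, 0), r, by rw [hrn]; exact odd_one, by rw [hrl]⟩
        have hle : SignedGraph.negGirth (SignedGraph.EDC G) ≤ ((p.length + 1 : ℕ) : ℕ∞) :=
          sInf_le hmem2
        refine hle.trans_eq ?_
        rw [← hlen]
        push_cast
        rfl
    · unfold SignedGraph.negGirth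
      apply le_sInf
      rintro n ⟨w, q, hodd, rfl⟩
      obtain ⟨p, hl, hc⟩ := edc_proj q
      have h0 : ((p.negCount + q.negCount : ℕ) : ZMod 2) = 0 := by
        have := hc
        rwa [left_eq_add] at this
      have hpodd : Odd p.negCount := by
        rw [odd_iff_zmod] at hodd ⊢
        push_cast at h0
        linear_combination h0 - hodd - h2
      have hq1 : 1 ≤ q.negCount := hodd.pos
      have hG : (sInf {n : ℕ∞ | ∃ (v : V) (p : G.Walk v v),
          Odd p.negCount ∧ (p.length : ℕ∞) = n}) ≤ (p.length : ℕ∞) :=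
        sInf_le ⟨w.1, p, hpodd, rfl⟩
      calc (sInf _) + 1 ≤ (p.length : ℕ∞) + 1 := add_le_add_left hG 1
        _ ≤ (q.length : ℕ∞) := by
            rw [← Nat.cast_one, ← Nat.cast_add, Nat.cast_le]
            omega
  constructor
  · rintro ⟨X, hX⟩
    refine ⟨⟨fun p => decide (p.1 ∈ X ↔ p.2 = 1), ?_⟩, key⟩
    have hpos : ∀ x y, G.pos x y → ¬((x ∈ X) ↔ (y ∈ X)) :=
      fun x y hp hiff => hX x y (Or.inl ⟨hp, hiff⟩)
    have hneg : ∀ x y, G.neg x y → ((x ∈ X) ↔ (y ∈ X)) := fun x y hn => by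
      by_contra hiff
      exact hX x y (Or.inr ⟨hn, hiff⟩)
    rintro ⟨x, i⟩ ⟨y, j⟩ h hd
    rw [decide_eq_decide] at hd
    rcases h with (⟨h, e⟩ | ⟨h, e⟩) | ⟨e, e'⟩
    · simp only at e
      subst e
      exact hpos x y h (by tauto)
    · simp only at e
      have hij := zmod2_one_iff e
      have := hneg x y h
      tauto
    · simp only at e e'
      subst e
      have hij := zmod2_one_iff e'
      tauto
  · rintro ⟨c, hc⟩
    refine ⟨⟨{p : V × ZMod 2 | c p.1 = true}, ?_⟩, ?_, key⟩
    · rintro p q (⟨hpos, hiff⟩ | ⟨hneg, hniff⟩)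
      · have hne : c p.1 ≠ c q.1 := by
          rcases hpos with ⟨h, _⟩ | ⟨h, _⟩
          · exact hc _ _ (Or.inl h)
          · exact hc _ _ (Or.inr h)
        simp only [Set.mem_setOf_eq] at hiff
        exact hne (Bool.eq_iff_iff.mpr hiff)
      · simp only [Set.mem_setOf_eq] at hniff
        exact hniff (by rw [hneg.1])
    · unfold SignedGraph.negGirth SignedGraph.oddGirth
      congr 1
      ext n
      constructor
      · rintro ⟨w, q, hodd, rfl⟩
        refine ⟨w, q, ?_, rfl⟩
        have hp := edc_parity hc q
        rw [if_pos rfl] at hp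
        rw [odd_iff_zmod] at hodd ⊢
        push_cast at hp
        linear_combination hp - hodd - h2
      · rintro ⟨w, q, hodd, rfl⟩
        refine ⟨w, q, ?_, rfl⟩
        have hp := edc_parity hc q
        rw [if_pos rfl] at hp
        rw [odd_iff_zmod] at hodd ⊢
        push_cast at hp
        linear_combination hp - hodd - h2
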